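/- arXiv:math/0501175 — 2 statements merged into one kernel-verified Lean document; each statement's English description precedes it below -/
import Mathlib

section
/- Let Q be a quiver and let (V,x), (W,y) be finite-dimensional representations over a field k. Then dim Hom_Q((V,x),(W,y)) − dim Ext¹_Q((V,x),(W,y)) = Σ_{i∈I} dim V_i · dim W_i − Σ_{h∈Ω} dim V_{h'} · dim W_{h''}. -/
open LinearMap

variable (k : Type) [Field k] (I Ω : Type) [Fintype I] [Fintype Ω]
  (src tgt : Ω → I)
  (V W : I → Type)
  [∀ i, AddCommGroup (V i)] [∀ i, Module k (V i)] [∀ i, FiniteDimensional k (V i)]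
  [∀ i, AddCommGroup (W i)] [∀ i, Module k (W i)] [∀ i, FiniteDimensional k (W i)]

/-- The map `a` of the four-term exact sequence
`0 → Hom_Q((V,x),(W,y)) → ⊕_i Hom(V_i,W_i) → ⊕_h Hom(V_{h'},W_{h''}) → Ext¹ → 0`,
sending `θ` to `(h ↦ y_h ∘ θ_{h'} − θ_{h''} ∘ x_h)`. Its kernel is `Hom_Q((V,x),(W,y))`
and its cokernel is `Ext¹_Q((V,x),(W,y))`. -/
noncomputable def amap
    (x : ∀ h : Ω, V (src h) →ₗ[k] V (tgt h))
    (y : ∀ h : Ω, W (src h) →ₗ[k] W (tgt h)) :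
    ((i : I) → V i →ₗ[k] W i) →ₗ[k] ((h : Ω) → V (src h) →ₗ[k] W (tgt h)) where
  toFun θ := fun h => (y h).comp (θ (src h)) - (θ (tgt h)).comp (x h)
  map_add' θ θ' := by
    funext h
    simp only [Pi.add_apply, LinearMap.comp_add, LinearMap.add_comp]
    abel
  map_smul' c θ := by
    funext h
    simp only [Pi.smul_apply, LinearMap.comp_smul, LinearMap.smul_comp,
      RingHom.id_apply, smul_sub]

/-- `dim Hom_Q((V,x),(W,y)) − dim Ext¹_Q((V,x),(W,y))
  = Σ_i dim V_i · dim W_i − Σ_{h∈Ω} dim V_{h'} · dim W_{h''}`,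
where `Hom_Q` is the kernel of `amap` and `Ext¹_Q` is its cokernel. -/
theorem euler_form_identity
    (x : ∀ h : Ω, V (src h) →ₗ[k] V (tgt h))
    (y : ∀ h : Ω, W (src h) →ₗ[k] W (tgt h)) :
    (Module.finrank k (LinearMap.ker (amap k I Ω src tgt V W x y)) : ℤ) -
      Module.finrank k
        (((h : Ω) → V (src h) →ₗ[k] W (tgt h)) ⧸
          LinearMap.range (amap k I Ω src tgt V W x y)) =
    (∑ i : I, (Module.finrank k (V i) : ℤ) * Module.finrank k (W i)) -
      ∑ h : Ω, (Module.finrank k (V (src h)) : ℤ) * Module.finrank k (W (tgt h)) := by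
  set f := amap k I Ω src tgt V W x y
  have h1 := LinearMap.finrank_range_add_finrank_ker f
  have h2 := Submodule.finrank_quotient_add_finrank (LinearMap.range f)
  have hd : Module.finrank k ((i : I) → V i →ₗ[k] W i)
      = ∑ i : I, Module.finrank k (V i) * Module.finrank k (W i) := by
    rw [Module.finrank_pi_fintype]
    exact Finset.sum_congr rfl fun i _ => Module.finrank_linearMap k k (V i) (W i)
  have hc : Module.finrank k ((h : Ω) → V (src h) →ₗ[k] W (tgt h))
      = ∑ h : Ω, Module.finrank k (V (src h)) * Module.finrank k (W (tgt h)) := by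
    rw [Module.finrank_pi_fintype]
    exact Finset.sum_congr rfl fun h _ => Module.finrank_linearMap k k _ _
  have := congrArg (Nat.cast : ℕ → ℤ) hd
  have := congrArg (Nat.cast : ℕ → ℤ) hc
  push_cast at *
  linarith [h1, h2]
end

section
/- Let V = ⊕_{r=1}^{N} V(r) be a decomposition of a representation of a quiver Q into subrepresentations such that Hom_Q(V(r), V(r')) = 0 whenever r > r'. Let φ be any automorphism of V. Then φ(V[r]) = V[r] for all r, where V[r] = ⊕_{m ≥ r} V(m); i.e., the filtration by the subspaces V[r] is preserved by every automorphism of V. -/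
/-- Let `V = ⊕_{r=1}^{N} V(r)` be a decomposition of a representation of a
quiver `Q` into subrepresentations `V(r) = (W r, xr r)` with `Hom_Q(V(r), V(r')) = 0`
whenever `r > r'`.  Then every automorphism `φ` of `V` preserves the filtration
`V[r] = ⊕_{m ≥ r} V(m)`: `φ(V[r]) = V[r]` for all `r`. -/
theorem automorphism_preserves_filtration
    (k : Type) [Field k] (I Ω : Type) (src tgt : Ω → I) (N : ℕ)
    (W : Fin N → I → Type)
    [∀ r i, AddCommGroup (W r i)] [∀ r i, Module k (W r i)]
    (xr : ∀ (r : Fin N) (h : Ω), W r (src h) →ₗ[k] W r (tgt h))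
    -- directedness: Hom_Q(V(r), V(r')) = 0 for r > r'
    (hdir : ∀ r r' : Fin N, r' < r →
      ∀ ψ : ∀ i : I, W r i →ₗ[k] W r' i,
        (∀ h : Ω, (ψ (tgt h)).comp (xr r h) = (xr r' h).comp (ψ (src h))) →
        ∀ i, ψ i = 0)
    -- φ is an automorphism of the direct sum representation V = ⊕_r V(r)
    (φ : ∀ i : I, ((r : Fin N) → W r i) →ₗ[k] ((r : Fin N) → W r i))
    (hbij : ∀ i, Function.Bijective (φ i))
    (hcomm : ∀ h : Ω,
      (φ (tgt h)).comp (LinearMap.pi fun r => (xr r h).comp (LinearMap.proj r)) =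
        (LinearMap.pi fun r => (xr r h).comp (LinearMap.proj r)).comp (φ (src h))) :
    -- φ preserves V[r] = ⊕_{m ≥ r} V(m) = {v | v m = 0 for m < r}
    ∀ (r : Fin N) (i : I),
      Submodule.map (φ i)
          (Submodule.pi {m : Fin N | m < r} fun m => (⊥ : Submodule k (W m i))) =
        Submodule.pi {m : Fin N | m < r} fun m => (⊥ : Submodule k (W m i)) := by
  classical
  -- core: any endomorphism intertwining with x is "upper triangular"
  have key : ∀ (f : ∀ i : I, ((r : Fin N) → W r i) →ₗ[k] ((r : Fin N) → W r i)),
      (∀ h : Ω, (f (tgt h)).comp (LinearMap.pi fun r => (xr r h).comp (LinearMap.proj r)) =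
        (LinearMap.pi fun r => (xr r h).comp (LinearMap.proj r)).comp (f (src h))) →
      ∀ (rr m : Fin N), m < rr → ∀ i (w : W rr i), f i (Pi.single rr w) m = 0 := by
    intro f hf rr m hlt i w
    have hz := hdir rr m hlt
      (fun i => (LinearMap.proj m).comp
        ((f i).comp (LinearMap.single k (fun r => W r i) rr))) ?_ i
    · simpa using LinearMap.congr_fun hz w
    · intro h
      ext v
      have hc := LinearMap.congr_fun (hf h) (Pi.single rr v)
      have hX : (LinearMap.pi fun r => (xr r h).comp (LinearMap.proj r))
          (Pi.single rr v) = Pi.single rr (xr rr h v) := by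
        funext n
        by_cases hn : n = rr
        · subst hn; simp [LinearMap.pi_apply]
        · simp [LinearMap.pi_apply, Pi.single_eq_of_ne hn]
      simp only [LinearMap.comp_apply] at hc
      rw [hX] at hc
      simpa using congrFun hc m
  -- any intertwining endomorphism preserves the filtration subspace
  have into : ∀ (f : ∀ i : I, ((r : Fin N) → W r i) →ₗ[k] ((r : Fin N) → W r i)),
      (∀ h : Ω, (f (tgt h)).comp (LinearMap.pi fun r => (xr r h).comp (LinearMap.proj r)) =
        (LinearMap.pi fun r => (xr r h).comp (LinearMap.proj r)).comp (f (src h))) →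
      ∀ (r : Fin N) (i : I) (v : (r : Fin N) → W r i),
        (∀ m, m < r → v m = 0) → ∀ m, m < r → f i v m = 0 := by
    intro f hf r i v hv m hm
    have hv' : v = ∑ rr : Fin N, Pi.single rr (v rr) := by
      funext n
      rw [Finset.sum_apply]
      simp [Pi.single_apply]
    rw [hv', map_sum]
    rw [Finset.sum_apply]
    apply Finset.sum_eq_zero
    intro rr _
    by_cases hrr : rr < r
    · rw [hv rr hrr]
      simp
    · exact key f hf rr m (lt_of_lt_of_le hm (not_lt.mp hrr)) i (v rr)
  intro r i
  -- inverse map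
  set g : ∀ j : I, ((r : Fin N) → W r j) →ₗ[k] ((r : Fin N) → W r j) :=
    fun j => ((LinearEquiv.ofBijective (φ j) (hbij j)).symm : _ →ₗ[k] _) with hg
  have hginv : ∀ j w, φ j (g j w) = w := fun j w =>
    (LinearEquiv.ofBijective (φ j) (hbij j)).apply_symm_apply w
  have hginv' : ∀ j w, g j (φ j w) = w := fun j w =>
    (LinearEquiv.ofBijective (φ j) (hbij j)).symm_apply_apply w
  have hgcomm : ∀ h : Ω, (g (tgt h)).comp (LinearMap.pi fun r => (xr r h).comp (LinearMap.proj r)) =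
      (LinearMap.pi fun r => (xr r h).comp (LinearMap.proj r)).comp (g (src h)) := by
    intro h
    refine LinearMap.ext fun w => ?_
    apply (hbij (tgt h)).injective
    simp only [LinearMap.comp_apply]
    rw [hginv]
    have := LinearMap.congr_fun (hcomm h) (g (src h) w)
    simp only [LinearMap.comp_apply] at this
    rw [this, hginv]
  apply le_antisymm
  · rintro x ⟨y, hy, rfl⟩
    intro m hm
    exact into φ hcomm r i y (fun m hm => hy m hm) m hm
  · intro x hx
    refine ⟨g i x, ?_, hginv i x⟩
    intro m hm
    exact into g hgcomm r i x (fun m hm => hx m hm) m hm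
end
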